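/- Let r ∈ ℕ_+ and s ∈ {1, ..., r}. Then for each n ≥ s, D_r(n) = Σ_{j=s}^n C(j-1, s-1)·(n!/(n-j)!)·D_{r-s}(n-j), where C(a,b) denotes the binomial coefficient. -/

import Mathlib

/-- The `r`-derangement number `D_r(n)`: the number of fixed-point-free permutations
of `n + r` elements such that the first `r` (distinguished) elements lie in pairwise
distinct cycles of the cycle decomposition. -/
noncomputable def rDerangement (r n : ℕ) : ℕ :=
  Nat.card {σ : Equiv.Perm (Fin (n + r)) //
    (∀ x, σ x ≠ x) ∧
    ∀ i j : Fin (n + r), (i : ℕ) < r → (j : ℕ) < r → i ≠ j → ¬ σ.SameCycle i j}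

/-!
Following the cycle of one distinguished point `a`, an `(r + 1)`-derangement is a cycle
`a → x₁ → ⋯ → x_j → a` through `j ≥ 1` distinct non-distinguished points, of which there are
`n (n - 1) ⋯ (n - j + 1)` choices, together with an `r`-derangement of the remaining points.
Hence `D_{r+1}(n) = ∑_{j=1}^n n^{(j)} D_r(n - j)` with `n^{(j)}` the falling factorial.
Iterating this `s` times and using `n^{(a)} (n - a)^{(b)} = n^{(a + b)}`, the term
`n^{(j)} D_{r-s}(n - j)` appears once for each composition of `j` into `s` positive parts,
that is `C(j - 1, s - 1)` times.
-/

open Finset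

theorem card_nodup_lists_of_length {α : Type*} [Finite α] (S : Set α) (j : ℕ) :
    Nat.card {t : List α // t.Nodup ∧ t.length = j ∧ ∀ x ∈ t, x ∈ S} =
      (Nat.card S).descFactorial j := by
  classical
  have : Fintype S := Fintype.ofFinite S
  let e : {t : List α // t.Nodup ∧ t.length = j ∧ ∀ x ∈ t, x ∈ S} ≃ (Fin j ↪ S) :=
    { toFun t := ⟨fun i => ⟨t.1[i.1]'(t.2.2.1.symm ▸ i.2), t.2.2.2 _ (List.getElem_mem _)⟩,
        fun i i' h => Fin.ext <| (t.2.1.getElem_inj_iff).1 (congrArg Subtype.val h)⟩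
      invFun e := ⟨List.ofFn fun i => (e i : α),
        List.nodup_ofFn.2 (Subtype.val_injective.comp e.injective), List.length_ofFn,
        fun x hx => by obtain ⟨i, rfl⟩ := List.mem_ofFn.1 hx; exact (e i).2⟩
      left_inv t := Subtype.ext <|
        List.ext_getElem (by simp [t.2.2.1]) fun _ _ _ => List.getElem_ofFn ..
      right_inv e := by ext; simp }
  rw [Nat.card_congr e, Nat.card_eq_fintype_card, Fintype.card_embedding_eq, Fintype.card_fin,
    Nat.card_eq_fintype_card]

theorem List.Nodup.length_le_card_of_forall_mem {α : Type*} [Finite α] {S : Set α} {t : List α}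
    (ht : t.Nodup) (hS : ∀ x ∈ t, x ∈ S) : t.length ≤ Nat.card S := by
  classical
  have hle : (↑t.toFinset : Set α).ncard ≤ S.ncard :=
    Set.ncard_le_ncard fun x hx => hS x (List.mem_toFinset.1 hx)
  rwa [Set.ncard_coe_finset, List.toFinset_card_of_nodup ht, ← Nat.card_coe_set_eq] at hle

theorem sum_Icc_choose_pred {s : ℕ} (hs : 1 ≤ s) (k : ℕ) :
    ∑ j ∈ Icc s k, (j - 1).choose (s - 1) = k.choose s := by
  obtain ⟨s, rfl⟩ := Nat.exists_eq_add_of_le' hs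
  induction k with
  | zero => simp
  | succ k ih =>
    rcases Nat.lt_or_ge (k + 1) (s + 1) with hk | hk
    · rw [Icc_eq_empty_of_lt hk, sum_empty, Nat.choose_eq_zero_of_lt hk]
    · rw [sum_Icc_succ_top hk, ih, Nat.choose_succ_succ' k s]
      simp [add_comm]

theorem descFactorial_convolution {f : ℕ → ℕ → ℕ}
    (hf : ∀ r n, f (r + 1) n = ∑ j ∈ Icc 1 n, n.descFactorial j * f r (n - j))
    (r n : ℕ) {s : ℕ} (hs : 1 ≤ s) :
    f (r + s) n = ∑ j ∈ Icc s n, (j - 1).choose (s - 1) * n.descFactorial j * f r (n - j) := by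
  induction s, hs using Nat.le_induction generalizing r with
  | base => simp [hf]
  | succ s hs ih =>
    calc f (r + (s + 1)) n
        = ∑ j ∈ Icc s n, (j - 1).choose (s - 1) * n.descFactorial j * f (r + 1) (n - j) := by
          rw [← ih, add_right_comm, add_assoc]
      _ = ∑ j ∈ Icc s n, ∑ k ∈ Icc (j + 1) n,
            (j - 1).choose (s - 1) * (n.descFactorial k * f r (n - k)) := by
          refine sum_congr rfl fun j hj => ?_
          obtain ⟨m, rfl⟩ := Nat.exists_eq_add_of_le (mem_Icc.1 hj).2
          rw [hf, mul_sum, Nat.add_sub_cancel_left, ← map_add_left_Icc, sum_map]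
          refine sum_congr rfl fun i _ => ?_
          rw [addLeftEmbedding_apply, ← Nat.descFactorial_mul_descFactorial (Nat.le_add_right j i)]
          simp only [Nat.add_sub_cancel_left, Nat.add_sub_add_left]
          ring
      _ = ∑ k ∈ Icc (s + 1) n, ∑ j ∈ Icc s (k - 1),
            (j - 1).choose (s - 1) * (n.descFactorial k * f r (n - k)) :=
          sum_comm' fun j k => by simp only [mem_Icc]; omega
      _ = ∑ k ∈ Icc (s + 1) n, (k - 1).choose (s + 1 - 1) * n.descFactorial k * f r (n - k) := by
          refine sum_congr rfl fun k _ => ?_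
          rw [← sum_mul, sum_Icc_choose_pred hs, Nat.add_sub_cancel, mul_assoc]

namespace Equiv.Perm

variable {α β : Type*}

def IsRDerangement (D : Set α) (σ : Perm α) : Prop :=
  (∀ x, σ x ≠ x) ∧ D.Pairwise fun x y => ¬ σ.SameCycle x y

theorem sameCycle_permCongr_iff (e : α ≃ β) {σ : Perm α} {x y : α} :
    (e.permCongr σ).SameCycle (e x) (e y) ↔ σ.SameCycle x y := by
  refine exists_congr fun i => ?_
  change (e.permCongrHom σ ^ i) (e x) = e y ↔ _
  rw [← map_zpow]
  simp [Equiv.permCongrHom]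

theorem isRDerangement_permCongr_iff (e : α ≃ β) {D : Set α} {D' : Set β}
    (hD : ∀ x, e x ∈ D' ↔ x ∈ D) {σ : Perm α} :
    IsRDerangement D' (e.permCongr σ) ↔ IsRDerangement D σ := by
  refine and_congr ⟨fun h x => by simpa using h (e x),
    fun h x => by simpa [← e.eq_symm_apply] using h (e.symm x)⟩ ?_
  refine ⟨fun h x hx y hy hxy hc => ?_, fun h x hx y hy hxy hc => ?_⟩
  · exact h ((hD x).2 hx) ((hD y).2 hy) (e.injective.ne hxy) ((sameCycle_permCongr_iff e).2 hc)
  · rw [← e.apply_symm_apply x, ← e.apply_symm_apply y, sameCycle_permCongr_iff] at hc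
    refine h ((hD _).1 ?_) ((hD _).1 ?_) (e.symm.injective.ne hxy) hc <;> simpa

theorem card_isRDerangement_congr (e : α ≃ β) {D : Set α} {D' : Set β}
    (hD : ∀ x, e x ∈ D' ↔ x ∈ D) :
    Nat.card {σ : Perm α // IsRDerangement D σ} = Nat.card {σ : Perm β // IsRDerangement D' σ} :=
  Nat.card_congr (e.permCongr.subtypeEquiv fun _ => (isRDerangement_permCongr_iff e hD).symm)

theorem rDerangement_eq_card (r n : ℕ) :
    rDerangement r n =
      Nat.card {σ : Perm (Fin (n + r)) // IsRDerangement {i : Fin (n + r) | (i : ℕ) < r} σ} :=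
  Nat.card_congr <| Equiv.subtypeEquivRight fun _ =>
    and_congr_right' ⟨fun h _ hi _ hj => h _ _ hi hj, fun h _ _ hi hj => h hi hj⟩

theorem card_isRDerangement [Finite α] {D : Set α} {r n : ℕ} (hD : Nat.card D = r)
    (hDc : Nat.card ↥Dᶜ = n) :
    Nat.card {σ : Perm α // IsRDerangement D σ} = rDerangement r n := by
  classical
  let e : α ≃ Fin (n + r) := (Equiv.sumCompl (· ∈ D)).symm.trans
    ((Equiv.sumCongr (Finite.equivFinOfCardEq hD) (Finite.equivFinOfCardEq hDc)).trans
      (finSumFinEquiv.trans (finCongr (add_comm r n))))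
  rw [rDerangement_eq_card, card_isRDerangement_congr e]
  intro x
  by_cases hx : x ∈ D <;> simp [e, hx]

variable {D : Set α} {a : α} {t : List α}

theorem card_preimage_val_of_cons (ha : a ∈ D) (htD : ∀ x ∈ t, x ∉ D) :
    Nat.card (Subtype.val ⁻¹' D : Set {x // x ∉ a :: t}) = Nat.card D - 1 := by
  have e : (Subtype.val ⁻¹' D : Set {x // x ∉ a :: t}) ≃ ↥(D \ {a}) :=
    (Equiv.subtypeSubtypeEquivSubtypeInter _ (· ∈ D)).trans <| Equiv.subtypeEquivRight fun x => by
      simp only [List.mem_cons, not_or, Set.mem_sdiff, Set.mem_singleton_iff]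
      exact ⟨fun h => ⟨h.2, h.1.1⟩, fun h => ⟨⟨h.2, fun hx => htD x hx h.1⟩, h.1⟩⟩
  rw [Nat.card_congr e, Nat.card_coe_set_eq, Nat.card_coe_set_eq,
    Set.ncard_sdiff_singleton_of_mem ha]

theorem card_compl_preimage_val_of_cons (ha : a ∈ D) (hl : (a :: t).Nodup) (htD : ∀ x ∈ t, x ∉ D) :
    Nat.card ↥(Subtype.val ⁻¹' D : Set {x // x ∉ a :: t})ᶜ = Nat.card ↥Dᶜ - t.length := by
  classical
  have e : ↥(Subtype.val ⁻¹' D : Set {x // x ∉ a :: t})ᶜ ≃ ↥(Dᶜ \ ↑t.toFinset) :=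
    (Equiv.subtypeSubtypeEquivSubtypeInter _ (· ∉ D)).trans <| Equiv.subtypeEquivRight fun x => by
      simp only [List.mem_cons, not_or, Set.mem_sdiff, Set.mem_compl_iff, List.coe_toFinset,
        Set.mem_ofPred_eq]
      exact ⟨fun h => ⟨h.2, h.1.2⟩, fun h => ⟨⟨fun hx => h.1 (hx ▸ ha), h.2⟩, h.1⟩⟩
  have hsub : (↑t.toFinset : Set α) ⊆ Dᶜ := fun x hx => htD x (List.mem_toFinset.1 hx)
  rw [Nat.card_congr e, Nat.card_coe_set_eq, Nat.card_coe_set_eq, Set.ncard_sdiff hsub,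
    Set.ncard_coe_finset, List.toFinset_card_of_nodup hl.of_cons]

variable [DecidableEq α]

section

variable {l : List α} (τ : Perm {x // x ∉ l})

theorem formPerm_mul_ofSubtype_apply_of_mem {x : α} (hx : x ∈ l) :
    (l.formPerm * ofSubtype τ) x = l.formPerm x := by
  rw [mul_apply, ofSubtype_apply_of_not_mem τ (not_not.2 hx)]

theorem formPerm_mul_ofSubtype_apply_of_notMem {x : α} (hx : x ∉ l) :
    (l.formPerm * ofSubtype τ) x = τ ⟨x, hx⟩ := by
  rw [mul_apply, ofSubtype_apply_of_mem τ hx]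
  exact List.formPerm_apply_of_notMem (τ ⟨x, hx⟩).2

theorem formPerm_mul_ofSubtype_apply_notMem_iff (x : α) :
    (l.formPerm * ofSubtype τ) x ∉ l ↔ x ∉ l := by
  by_cases hx : x ∈ l
  · rw [formPerm_mul_ofSubtype_apply_of_mem τ hx]
    exact iff_of_false (not_not.2 (List.formPerm_apply_mem_of_mem hx)) (not_not.2 hx)
  · rw [formPerm_mul_ofSubtype_apply_of_notMem τ hx]
    exact iff_of_true (τ ⟨x, hx⟩).2 hx

theorem subtypePerm_formPerm_mul_ofSubtype {h : ∀ x, (l.formPerm * ofSubtype τ) x ∉ l ↔ x ∉ l} :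
    (l.formPerm * ofSubtype τ).subtypePerm h = τ := by
  ext x
  simp [formPerm_mul_ofSubtype_apply_of_notMem τ x.2]

theorem sameCycle_formPerm_mul_ofSubtype_iff {x y : {x // x ∉ l}} :
    (l.formPerm * ofSubtype τ).SameCycle x y ↔ τ.SameCycle x y := by
  have h := sameCycle_subtypePerm (x := x) (y := y)
    (h := formPerm_mul_ofSubtype_apply_notMem_iff τ)
  rw [subtypePerm_formPerm_mul_ofSubtype] at h
  exact h.symm

theorem formPerm_mul_ofSubtype_apply_ne_self (hl : l.Nodup) (hlen : 2 ≤ l.length)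
    (hτ : ∀ y, τ y ≠ y) (x : α) : (l.formPerm * ofSubtype τ) x ≠ x := by
  by_cases hx : x ∈ l
  · rw [formPerm_mul_ofSubtype_apply_of_mem τ hx]
    exact (List.formPerm_apply_mem_ne_self_iff _ hl x hx).2 hlen
  · rw [formPerm_mul_ofSubtype_apply_of_notMem τ hx]
    exact fun h => hτ ⟨x, hx⟩ (Subtype.ext h)

end

variable [Fintype α]

theorem apply_mem_toList_iff {σ : Perm α} {a x : α} : σ x ∈ σ.toList a ↔ x ∈ σ.toList a := by
  simp only [mem_toList_iff, sameCycle_apply_right]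

theorem apply_notMem_iff_of_toList_eq {σ : Perm α} {a : α} {l : List α} (h : σ.toList a = l)
    (x : α) : σ x ∉ l ↔ x ∉ l :=
  h ▸ apply_mem_toList_iff.not

theorem toList_eq_cons_tail {σ : Perm α} {a : α} (ha : σ a ≠ a) :
    σ.toList a = a :: (σ.toList a).tail := by
  rcases hl : σ.toList a with _ | ⟨b, t⟩
  · simp [toList_eq_nil_iff, ha] at hl
  · have h0 := getElem_toList σ a 0 (by simp [hl])
    simp only [hl, List.getElem_cons_zero, pow_zero, one_apply] at h0
    simp [h0]

theorem toList_formPerm_mul_ofSubtype (τ : Perm {x // x ∉ a :: t})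
    (hl : (a :: t).Nodup) (ht : t ≠ []) :
    ((a :: t).formPerm * ofSubtype τ).toList a = a :: t := by
  set σ := (a :: t).formPerm * ofSubtype τ
  have hlen : 2 ≤ (a :: t).length := Nat.succ_le_succ (List.length_pos_of_ne_nil ht)
  have hdisj : (a :: t).formPerm.Disjoint (ofSubtype τ) := fun x => by
    by_cases hx : x ∈ a :: t
    · exact Or.inr (ofSubtype_apply_of_not_mem τ (not_not.2 hx))
    · exact Or.inl (List.formPerm_apply_of_notMem hx)
  have hmoves : (a :: t).formPerm a ≠ a :=
    (List.formPerm_apply_mem_ne_self_iff _ hl a List.mem_cons_self).2 hlen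
  have hcycle : σ.cycleOf a = (a :: t).formPerm := by
    rw [hdisj.cycleOf_mul_distrib, (List.isCycle_formPerm hl hlen).cycleOf_eq hmoves,
      (cycleOf_eq_one_iff _).2 (ofSubtype_apply_of_not_mem τ (by simp)), mul_one]
  have hσa : σ a ≠ a := by rwa [formPerm_mul_ofSubtype_apply_of_mem τ List.mem_cons_self]
  have h2 : 2 ≤ (σ.toList a).length := two_le_length_toList_iff_mem_support.2 (mem_support.2 hσa)
  rw [← toList_formPerm_nontrivial _ h2 (nodup_toList σ a), formPerm_toList, hcycle,
    List.get_eq_getElem, toList_getElem_zero σ a (mem_support.2 hσa)]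
  exact toList_formPerm_nontrivial _ hlen hl

theorem formPerm_mul_ofSubtype_subtypePerm {σ : Perm α} {a : α} {l : List α}
    (hl : σ.toList a = l) :
    l.formPerm * ofSubtype (σ.subtypePerm (p := (· ∉ l)) (apply_notMem_iff_of_toList_eq hl)) =
      σ := by
  subst hl
  ext x
  by_cases hx : x ∈ σ.toList a
  · rw [formPerm_mul_ofSubtype_apply_of_mem _ hx, formPerm_toList]
    exact (mem_toList_iff.1 hx).1.cycleOf_apply
  · rw [formPerm_mul_ofSubtype_apply_of_notMem _ hx]
    rfl

theorem isRDerangement_formPerm_mul_ofSubtype_iff (ha : a ∈ D) (hl : (a :: t).Nodup) (ht : t ≠ [])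
    (htD : ∀ x ∈ t, x ∉ D) (τ : Perm {x // x ∉ a :: t}) :
    IsRDerangement D ((a :: t).formPerm * ofSubtype τ) ↔ IsRDerangement (Subtype.val ⁻¹' D) τ := by
  set σ := (a :: t).formPerm * ofSubtype τ
  have hlen : 2 ≤ (a :: t).length := Nat.succ_le_succ (List.length_pos_of_ne_nil ht)
  have hmemD : ∀ x ∈ D, x ∈ a :: t → x = a := fun x hxD hx =>
    (List.mem_cons.1 hx).resolve_right fun hxt => htD x hxt hxD
  constructor
  · rintro ⟨hfix, hpair⟩
    refine ⟨fun x hx => hfix x ?_, fun x hx y hy hxy hc => ?_⟩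
    · rw [formPerm_mul_ofSubtype_apply_of_notMem τ x.2, hx]
    · exact hpair hx hy (Subtype.coe_injective.ne hxy)
        ((sameCycle_formPerm_mul_ofSubtype_iff τ).2 hc)
  · rintro ⟨hfix, hpair⟩
    have hσa : a ∈ σ.support := mem_support.2 <|
      formPerm_mul_ofSubtype_apply_ne_self τ hl hlen hfix a
    have hcycle_a : ∀ y ∈ D, σ.SameCycle a y → y = a := fun y hy hc =>
      hmemD y hy (toList_formPerm_mul_ofSubtype τ hl ht ▸ mem_toList_iff.2 ⟨hc, hσa⟩)
    refine ⟨formPerm_mul_ofSubtype_apply_ne_self τ hl hlen hfix, fun x hx y hy hxy hc => ?_⟩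
    by_cases hxa : x = a
    · subst hxa
      exact hxy (hcycle_a y hy hc).symm
    by_cases hya : y = a
    · subst hya
      exact hxy (hcycle_a x hx hc.symm)
    have hxl : x ∉ a :: t := fun h => hxa (hmemD x hx h)
    have hyl : y ∉ a :: t := fun h => hya (hmemD y hy h)
    exact hpair (x := ⟨x, hxl⟩) hx (y := ⟨y, hyl⟩) hy (by simpa using hxy)
      ((sameCycle_formPerm_mul_ofSubtype_iff τ).1 hc)

def isRDerangementToListEquiv (ha : a ∈ D) (hl : (a :: t).Nodup) (ht : t ≠ [])
    (htD : ∀ x ∈ t, x ∉ D) :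
    {σ : Perm α // IsRDerangement D σ ∧ σ.toList a = a :: t} ≃
      {τ : Perm {x // x ∉ a :: t} // IsRDerangement (Subtype.val ⁻¹' D) τ} where
  toFun σ := ⟨σ.1.subtypePerm (p := (· ∉ a :: t)) (apply_notMem_iff_of_toList_eq σ.2.2),
    by
      rw [← isRDerangement_formPerm_mul_ofSubtype_iff ha hl ht htD,
        formPerm_mul_ofSubtype_subtypePerm σ.2.2]
      exact σ.2.1⟩
  invFun τ := ⟨(a :: t).formPerm * ofSubtype τ.1,
    (isRDerangement_formPerm_mul_ofSubtype_iff ha hl ht htD τ.1).2 τ.2,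
    toList_formPerm_mul_ofSubtype τ.1 hl ht⟩
  left_inv σ := Subtype.ext (formPerm_mul_ofSubtype_subtypePerm σ.2.2)
  right_inv τ := Subtype.ext <| by dsimp only; exact subtypePerm_formPerm_mul_ofSubtype τ.1

theorem card_isRDerangement_toList_eq_cons (ha : a ∈ D) (hl : (a :: t).Nodup) (ht : t ≠ [])
    (htD : ∀ x ∈ t, x ∉ D) :
    Nat.card {σ : Perm α // IsRDerangement D σ ∧ σ.toList a = a :: t} =
      rDerangement (Nat.card D - 1) (Nat.card ↥Dᶜ - t.length) := by
  rw [Nat.card_congr (isRDerangementToListEquiv ha hl ht htD)]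
  exact card_isRDerangement (card_preimage_val_of_cons ha htD)
    (card_compl_preimage_val_of_cons ha hl htD)

theorem IsRDerangement.ne_nil_and_notMem_of_toList_eq_cons (ha : a ∈ D) {σ : Perm α}
    (hσ : IsRDerangement D σ) (h : σ.toList a = a :: t) : t ≠ [] ∧ ∀ x ∈ t, x ∉ D := by
  refine ⟨by rintro rfl; exact toList_ne_singleton _ _ _ h, fun x hx hxD => ?_⟩
  have hxl : x ∈ σ.toList a := h ▸ List.mem_cons_of_mem a hx
  have hxa : a ≠ x := fun hax => (List.nodup_cons.1 (h ▸ nodup_toList σ a)).1 (hax ▸ hx)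
  exact hσ.2 ha hxD hxa (mem_toList_iff.1 hxl).1

theorem card_isRDerangement_eq_sum_toList :
    Nat.card {σ : Perm α // IsRDerangement D σ} =
      ∑ t : {t : List α // t.Nodup},
        Nat.card {σ : Perm α // IsRDerangement D σ ∧ σ.toList a = a :: t.1} := by
  let κ : {σ : Perm α // IsRDerangement D σ} → {t : List α // t.Nodup} := fun σ =>
    ⟨(σ.1.toList a).tail, (nodup_toList _ _).sublist (List.tail_sublist _)⟩
  rw [← Nat.card_congr (Equiv.sigmaFiberEquiv κ), Nat.card_sigma]
  refine Fintype.sum_congr _ _ fun t => Nat.card_congr ?_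
  exact (Equiv.subtypeEquivRight fun _ => Subtype.ext_iff).trans <|
    (Equiv.subtypeSubtypeEquivSubtypeInter _ fun σ : Perm α => (σ.toList a).tail = t.1).trans <|
      Equiv.subtypeEquivRight fun σ => and_congr_right fun hσ => by
        rw [toList_eq_cons_tail (hσ.1 a), List.tail_cons, List.cons_inj_right]

theorem card_isRDerangement_eq_sum (ha : a ∈ D) :
    Nat.card {σ : Perm α // IsRDerangement D σ} =
      ∑ j ∈ Icc 1 (Nat.card ↥Dᶜ),
        (Nat.card ↥Dᶜ).descFactorial j * rDerangement (Nat.card D - 1) (Nat.card ↥Dᶜ - j) := by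
  classical
  set n := Nat.card ↥Dᶜ
  let P : {t : List α // t.Nodup} → Prop := fun t => t.1 ≠ [] ∧ ∀ x ∈ t.1, x ∉ D
  have hlen (t) (ht : P t) : t.1.length ∈ Icc 1 n :=
    mem_Icc.2 ⟨List.length_pos_of_ne_nil ht.1, t.2.length_le_card_of_forall_mem ht.2⟩
  have hcount (j : ℕ) (hj : 1 ≤ j) : #{t | P t ∧ t.1.length = j} = n.descFactorial j := by
    rw [← card_nodup_lists_of_length Dᶜ j, ← Fintype.card_subtype, ← Nat.card_eq_fintype_card]
    refine Nat.card_congr <| (Equiv.subtypeSubtypeEquivSubtypeInter List.Nodup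
      fun t => (t ≠ [] ∧ ∀ x ∈ t, x ∉ D) ∧ t.length = j).trans <|
      Equiv.subtypeEquivRight fun t => ⟨fun ⟨hnd, ⟨_, hD⟩, hj⟩ => ⟨hnd, hj, hD⟩,
        fun ⟨hnd, hj', hD⟩ => ⟨hnd, ⟨List.ne_nil_of_length_pos (hj' ▸ hj), hD⟩, hj'⟩⟩
  calc Nat.card {σ : Perm α // IsRDerangement D σ}
      = ∑ t with P t, rDerangement (Nat.card D - 1) (n - t.1.length) := by
        rw [card_isRDerangement_eq_sum_toList, sum_filter]
        refine sum_congr rfl fun t _ => ?_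
        split_ifs with hP
        · have hl : (a :: t.1).Nodup := List.nodup_cons.2 ⟨fun hat => hP.2 a hat ha, t.2⟩
          exact card_isRDerangement_toList_eq_cons ha hl hP.1 hP.2
        · exact Nat.card_eq_zero.2 <| Or.inl
            ⟨fun σ => hP (σ.2.1.ne_nil_and_notMem_of_toList_eq_cons ha σ.2.2)⟩
    _ = ∑ j ∈ Icc 1 n, n.descFactorial j * rDerangement (Nat.card D - 1) (n - j) := by
        rw [← sum_fiberwise_of_maps_to' (fun t ht => hlen t (mem_filter.1 ht).2)
          (fun j => rDerangement (Nat.card D - 1) (n - j))]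
        refine sum_congr rfl fun j hj => ?_
        rw [sum_const, filter_filter, hcount j (mem_Icc.1 hj).1, smul_eq_mul]

end Equiv.Perm

theorem rDerangement_succ (r n : ℕ) :
    rDerangement (r + 1) n = ∑ j ∈ Icc 1 n, n.descFactorial j * rDerangement r (n - j) := by
  have hD : Nat.card (Set.range (Sum.inl : Fin (r + 1) → Fin (r + 1) ⊕ Fin n)) = r + 1 := by
    rw [Nat.card_range_of_injective Sum.inl_injective, Nat.card_eq_fintype_card, Fintype.card_fin]
  have hDc : Nat.card ↥(Set.range (Sum.inl : Fin (r + 1) → Fin (r + 1) ⊕ Fin n))ᶜ = n := by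
    rw [Set.compl_range_inl, Nat.card_range_of_injective Sum.inr_injective,
      Nat.card_eq_fintype_card, Fintype.card_fin]
  rw [← Equiv.Perm.card_isRDerangement hD hDc,
    Equiv.Perm.card_isRDerangement_eq_sum (Set.mem_range_self 0), hD, hDc, Nat.add_sub_cancel]

theorem rDerangement_convolution_general (r s n : ℕ) (hs : 1 ≤ s) (hsr : s ≤ r) :
    rDerangement r n =
      ∑ j ∈ Finset.Icc s n,
        (j - 1).choose (s - 1) * (n.factorial / (n - j).factorial) *
          rDerangement (r - s) (n - j) := by
  obtain ⟨q, rfl⟩ := Nat.exists_eq_add_of_le' hsr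
  rw [Nat.add_sub_cancel, descFactorial_convolution rDerangement_succ q n hs]
  refine Finset.sum_congr rfl fun j hj => ?_
  rw [Nat.descFactorial_eq_div (Finset.mem_Icc.1 hj).2]

theorem rDerangement_convolution (r s n : ℕ) (hr : 0 < r) (hs : 1 ≤ s) (hsr : s ≤ r)
    (hn : s ≤ n) :
    rDerangement r n =
      ∑ j ∈ Finset.Icc s n,
        (j - 1).choose (s - 1) * (n.factorial / (n - j).factorial) *
          rDerangement (r - s) (n - j) :=
  rDerangement_convolution_general r s n hs hsr
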